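/- Let S be the flat bandlimited PSD with maximal frequency f_m > 0 and power σ² > 0, and let the sampling frequency satisfy 0 < f_s ≤ 2 f_m. Then the reconstruction NMSE equals ζ(f_s) = 1 − f_s/(2 f_m). -/

import Mathlib

open MeasureTheory

noncomputable def flatPSD (fm σ2 : ℝ) : ℝ → ℝ :=
  Set.indicator (Set.Icc (-fm) fm) (fun _ => σ2 / (2 * fm))

/-- The `0/0 = 0` convention of the definition is Lean's division by zero. -/
noncomputable def nmse (S : ℝ → ℝ) (fs : ℝ) : ℝ :=
  1 - (1 / ∫ f : ℝ, S f) *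
    ∑' k : ℤ, ∫ f in (-(fs / 2))..(fs / 2),
      (S (f - (k : ℝ) * fs)) ^ 2 / (∑' k' : ℤ, S (f - (k' : ℝ) * fs))

/-!
Since `S ^ 2 = c • S` for `c = σ²/(2 f_m)`, the `k`-th integrand is `c` times the share
`S(f - k f_s) / ∑ₖ' S(f - k' f_s)` of the `k`-th alias, so the integrands sum to `c` wherever
some alias is nonzero. For `f_s ≤ 2 f_m` the `k = 0` alias already covers the whole band
`[-f_s/2, f_s/2]`, hence `∑ₖ ∫ = f_s c` and `ζ(f_s) = 1 - f_s c / σ²`.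
-/

open Set

theorem hasSum_sq_div_tsum_of_sq_eq_mul {ι : Type*} {T : ι → ℝ} {c : ℝ} (hT : Summable T)
    (hsq : ∀ k, T k ^ 2 = c * T k) (hne : ∑' k, T k ≠ 0) :
    HasSum (fun k => T k ^ 2 / ∑' k', T k') c := by
  simp_rw [hsq]
  simpa [mul_div_assoc, div_self hne] using (hT.hasSum.mul_left c).div_const (∑' k, T k)

theorem nmse_eq_of_sq_eq_mul {S : ℝ → ℝ} {c fs : ℝ} (hS : Measurable S) (hS_nonneg : ∀ x, 0 ≤ S x)
    (hsq : ∀ x, S x ^ 2 = c * S x)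
    (hsumm : ∀ f, Summable fun k : ℤ => S (f - k * fs))
    (hcover : ∀ f ∈ uIcc (-(fs / 2)) (fs / 2), ∑' k : ℤ, S (f - k * fs) ≠ 0) :
    nmse S fs = 1 - fs * c / ∫ f, S f := by
  set H : ℤ → ℝ → ℝ := fun k f => S (f - k * fs) ^ 2 / ∑' k' : ℤ, S (f - k' * fs)
  have hH_meas (k : ℤ) : Measurable (H k) :=
    ((hS.comp (measurable_id.sub_const _)).pow_const 2).div
      (Measurable.tsum fun k' => hS.comp (measurable_id.sub_const _))
  have hH_nonneg (k : ℤ) (f : ℝ) : 0 ≤ H k f :=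
    div_nonneg (sq_nonneg _) (tsum_nonneg fun _ => hS_nonneg _)
  have hH_sum : ∀ f ∈ uIoc (-(fs / 2)) (fs / 2), HasSum (fun k => H k f) c := fun f hf =>
    hasSum_sq_div_tsum_of_sq_eq_mul (hsumm f) (fun _ => hsq _) (hcover f (uIoc_subset_uIcc hf))
  have hswap : HasSum (fun k => ∫ f in (-(fs / 2))..(fs / 2), H k f)
      (∫ _ in (-(fs / 2))..(fs / 2), c) :=
    intervalIntegral.hasSum_integral_of_dominated_convergence H
      (fun k => (hH_meas k).aestronglyMeasurable)
      (fun k => .of_forall fun f _ => (Real.norm_of_nonneg (hH_nonneg k f)).le)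
      (.of_forall fun f hf => (hH_sum f hf).summable)
      (intervalIntegrable_const.congr fun f hf => (hH_sum f hf).tsum_eq.symm)
      (.of_forall hH_sum)
  rw [nmse, hswap.tsum_eq, intervalIntegral.integral_const, smul_eq_mul]
  ring

theorem summable_comp_sub_int_mul_of_support_subset_Icc {S : ℝ → ℝ} {a b fs : ℝ}
    (hsupp : S.support ⊆ Icc a b) (hfs : 0 < fs) (f : ℝ) :
    Summable fun k : ℤ => S (f - k * fs) := by
  refine summable_of_ne_finset_zero (s := Finset.Icc ⌈(f - b) / fs⌉ ⌊(f - a) / fs⌋) fun k hk => ?_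
  refine Function.notMem_support.mp fun hmem => hk ?_
  obtain ⟨hlo, hhi⟩ := hsupp hmem
  rw [Finset.mem_Icc, Int.ceil_le, Int.le_floor, div_le_iff₀ hfs, le_div_iff₀ hfs]
  constructor <;> linarith

namespace flatPSD

variable {fm σ2 : ℝ}

theorem sq_eq_mul (x : ℝ) : flatPSD fm σ2 x ^ 2 = σ2 / (2 * fm) * flatPSD fm σ2 x := by
  by_cases hx : x ∈ Icc (-fm) fm <;> simp [flatPSD, hx, sq]

theorem measurable : Measurable (flatPSD fm σ2) :=
  measurable_const.indicator measurableSet_Icc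

theorem nonneg (hfm : 0 ≤ fm) (hσ : 0 ≤ σ2) (x : ℝ) : 0 ≤ flatPSD fm σ2 x :=
  indicator_nonneg (fun _ _ => by positivity) x

theorem support_subset : (flatPSD fm σ2).support ⊆ Icc (-fm) fm :=
  support_indicator_subset

theorem integral_eq (hfm : 0 < fm) : ∫ f, flatPSD fm σ2 f = σ2 := by
  rw [flatPSD, integral_indicator_const _ measurableSet_Icc, measureReal_def, Real.volume_Icc,
    ENNReal.toReal_ofReal (by linarith), smul_eq_mul]
  field_simp
  ring

theorem tsum_comp_sub_int_mul_pos (hfm : 0 < fm) (hσ : 0 < σ2) {fs : ℝ} (hfs : 0 < fs)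
    (hfs2 : fs ≤ 2 * fm) {f : ℝ} (hf : f ∈ uIcc (-(fs / 2)) (fs / 2)) :
    0 < ∑' k : ℤ, flatPSD fm σ2 (f - k * fs) := by
  rw [uIcc_of_le (by linarith)] at hf
  have hband : f ∈ Icc (-fm) fm := ⟨by linarith [hf.1], by linarith [hf.2]⟩
  calc 0 < flatPSD fm σ2 (f - ((0 : ℤ) : ℝ) * fs) := by
        rw [Int.cast_zero, zero_mul, sub_zero, flatPSD, indicator_of_mem hband]
        positivity
    _ ≤ _ := (summable_comp_sub_int_mul_of_support_subset_Icc support_subset hfs f).le_tsum 0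
        fun k _ => nonneg hfm.le hσ.le _

end flatPSD

/-- For the flat bandlimited PSD with maximal frequency `f_m` and power `σ²`,
sub-Nyquist uniform sampling at rate `0 < f_s ≤ 2 f_m` yields NMSE `1 − f_s/(2 f_m)`. -/
theorem nmse_flatPSD (fm σ2 fs : ℝ) (hfm : 0 < fm) (hσ : 0 < σ2)
    (hfs : 0 < fs) (hfs2 : fs ≤ 2 * fm) :
    nmse (flatPSD fm σ2) fs = 1 - fs / (2 * fm) := by
  rw [nmse_eq_of_sq_eq_mul flatPSD.measurable (flatPSD.nonneg hfm.le hσ.le) flatPSD.sq_eq_mul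
      (summable_comp_sub_int_mul_of_support_subset_Icc flatPSD.support_subset hfs)
      fun f hf => (flatPSD.tsum_comp_sub_int_mul_pos hfm hσ hfs hfs2 hf).ne',
    flatPSD.integral_eq hfm]
  field_simp
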